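/- For every a > 0 and b ∈ (0,1), if (x,y) ∈ [0,1]² satisfies 0 ≤ x < y ≤ 1 (the point lies above the diagonal), then the sequence of iterates F_{a,b}^n(x,y) converges to (0,1) as n → ∞. -/

import Mathlib

/-- The two-dimensional map `F_{a,b}`. -/
noncomputable def chaosMap2 (a b : ℝ) : ℝ × ℝ → ℝ × ℝ :=
  fun p => (p.1 / (p.1 + (1 - p.1) * Real.exp (a * (p.2 - b))),
            p.2 / (p.2 + (1 - p.2) * Real.exp (a * (p.1 - b))))

/-!
Write `b = sigmoid ℓ` and pass to logit coordinates `x = sigmoid u`, `y = sigmoid v`: the map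
becomes `(u, v) ↦ (u - a (sigmoid v - b), v - a (sigmoid u - b))`, and the gap `v - u` grows by
`a (y - x) ≥ 0` at each step. Once `u < ℓ < v`, the coordinate `u` decreases and `v` increases by
at least fixed amounts per step, so the orbit escapes to `(-∞, +∞)`, i.e. `(x, y) → (0, 1)`.
If the orbit never enters that region, then `u` stays bounded below and `v` bounded above, so `u`
ranges in a compact interval on which `sigmoid (u + d₀) - sigmoid u`, with `d₀ = v₀ - u₀` the
initial gap, is bounded away from `0`; the gap then grows linearly while staying bounded, a
contradiction. On the edges `x = 0` and `y = 1` the map is a translation of the remaining logit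
coordinate.
-/

open Real Filter Topology Set

lemma sigmoid_div_sigmoid_add_mul_exp (u c : ℝ) :
    sigmoid u / (sigmoid u + (1 - sigmoid u) * exp c) = sigmoid (u - c) := by
  rw [← sigmoid_neg, ← sigmoid_mul_rexp_neg, mul_assoc, ← exp_add, ← mul_one_add,
    div_mul_cancel_left₀ (sigmoid_pos u).ne', sigmoid_def, neg_sub, sub_eq_neg_add]

lemma tendsto_atTop_of_add_mul_le {w : ℕ → ℝ} {w₀ c : ℝ} (hc : 0 < c)
    (h : ∀ n, w₀ + n * c ≤ w n) : Tendsto w atTop atTop :=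
  tendsto_atTop_mono h <|
    tendsto_atTop_add_const_left _ _ (tendsto_natCast_atTop_atTop.atTop_mul_const hc)

lemma tendsto_atBot_of_le_sub_mul {w : ℕ → ℝ} {w₀ c : ℝ} (hc : 0 < c)
    (h : ∀ n, w n ≤ w₀ - n * c) : Tendsto w atTop atBot :=
  tendsto_neg_atTop_iff.1 <| tendsto_atTop_of_add_mul_le (w₀ := -w₀) hc fun n => by linarith [h n]

lemma exists_pos_le_sigmoid_add_sub {d : ℝ} (hd : 0 < d) (m M : ℝ) :
    ∃ ε > 0, ∀ t ∈ Icc m M, ε ≤ sigmoid (t + d) - sigmoid t :=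
  isCompact_Icc.exists_forall_le' (by fun_prop)
    fun t _ => sub_pos.2 (sigmoid_lt (lt_add_of_pos_right t hd))

noncomputable def logitMap (a ℓ : ℝ) (p : ℝ × ℝ) : ℝ × ℝ :=
  (p.1 - a * (sigmoid p.2 - sigmoid ℓ), p.2 - a * (sigmoid p.1 - sigmoid ℓ))

lemma semiconj_sigmoid_logitMap (a ℓ : ℝ) :
    Function.Semiconj (Prod.map sigmoid sigmoid) (logitMap a ℓ) (chaosMap2 a (sigmoid ℓ)) :=
  fun _ => by simp only [chaosMap2, logitMap, Prod.map, sigmoid_div_sigmoid_add_mul_exp]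

variable {a ℓ : ℝ}

lemma logitMap_snd_sub_fst (q : ℝ × ℝ) :
    (logitMap a ℓ q).2 - (logitMap a ℓ q).1 = q.2 - q.1 + a * (sigmoid q.2 - sigmoid q.1) := by
  simp only [logitMap]; ring

lemma le_iterate_logitMap_snd_sub_fst (ha : 0 ≤ a) {p : ℝ × ℝ} (hp : p.1 ≤ p.2) (n : ℕ) :
    p.2 - p.1 ≤ ((logitMap a ℓ)^[n] p).2 - ((logitMap a ℓ)^[n] p).1 := by
  induction n with
  | zero => exact le_rfl
  | succ n ih =>
    rw [Function.iterate_succ_apply', logitMap_snd_sub_fst]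
    have : 0 ≤ sigmoid ((logitMap a ℓ)^[n] p).2 - sigmoid ((logitMap a ℓ)^[n] p).1 :=
      sub_nonneg.2 (sigmoid_le (by linarith))
    nlinarith [mul_nonneg ha this]

lemma tendsto_iterate_logitMap_of_fst_lt_lt_snd (ha : 0 < a) {p : ℝ × ℝ} (h₁ : p.1 < ℓ)
    (h₂ : ℓ < p.2) :
    Tendsto (fun n => ((logitMap a ℓ)^[n] p).1) atTop atBot ∧
      Tendsto (fun n => ((logitMap a ℓ)^[n] p).2) atTop atTop := by
  set c₁ := a * (sigmoid p.2 - sigmoid ℓ)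
  set c₂ := a * (sigmoid ℓ - sigmoid p.1)
  have hc₁ : 0 < c₁ := mul_pos ha (sub_pos.2 (sigmoid_lt h₂))
  have hc₂ : 0 < c₂ := mul_pos ha (sub_pos.2 (sigmoid_lt h₁))
  have drift : ∀ n : ℕ, ((logitMap a ℓ)^[n] p).1 ≤ p.1 - n * c₁ ∧
      p.2 + n * c₂ ≤ ((logitMap a ℓ)^[n] p).2 := by
    intro n
    induction n with
    | zero => simp
    | succ n ih =>
      rw [Function.iterate_succ_apply']
      have hv : sigmoid p.2 ≤ sigmoid ((logitMap a ℓ)^[n] p).2 :=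
        sigmoid_le (by nlinarith [ih.2, Nat.cast_nonneg (α := ℝ) n])
      have hu : sigmoid ((logitMap a ℓ)^[n] p).1 ≤ sigmoid p.1 :=
        sigmoid_le (by nlinarith [ih.1, Nat.cast_nonneg (α := ℝ) n])
      simp only [logitMap]
      push_cast
      constructor <;> nlinarith [ih.1, ih.2]
  exact ⟨tendsto_atBot_of_le_sub_mul hc₁ fun n => (drift n).1,
    tendsto_atTop_of_add_mul_le hc₂ fun n => (drift n).2⟩

lemma min_le_logitMap_fst (ha : 0 ≤ a) {q : ℝ × ℝ} (hq : ℓ ≤ q.1 ∨ q.2 ≤ ℓ) :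
    min q.1 (ℓ - a) ≤ (logitMap a ℓ q).1 := by
  simp only [logitMap]
  rcases hq with hq | hq
  · nlinarith [sigmoid_lt_one q.2, sigmoid_pos ℓ, min_le_right q.1 (ℓ - a)]
  · nlinarith [sigmoid_le hq, min_le_left q.1 (ℓ - a)]

lemma logitMap_snd_le_max (ha : 0 ≤ a) {q : ℝ × ℝ} (hq : ℓ ≤ q.1 ∨ q.2 ≤ ℓ) :
    (logitMap a ℓ q).2 ≤ max q.2 (ℓ + a) := by
  simp only [logitMap]
  rcases hq with hq | hq
  · nlinarith [sigmoid_le hq, le_max_left q.2 (ℓ + a)]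
  · nlinarith [sigmoid_pos q.1, sigmoid_lt_one ℓ, le_max_right q.2 (ℓ + a)]

lemma iterate_logitMap_bounds (ha : 0 ≤ a) {p : ℝ × ℝ}
    (hp : ∀ n, ℓ ≤ ((logitMap a ℓ)^[n] p).1 ∨ ((logitMap a ℓ)^[n] p).2 ≤ ℓ) (n : ℕ) :
    min p.1 (ℓ - a) ≤ ((logitMap a ℓ)^[n] p).1 ∧ ((logitMap a ℓ)^[n] p).2 ≤ max p.2 (ℓ + a) := by
  induction n with
  | zero => exact ⟨min_le_left _ _, le_max_left _ _⟩
  | succ n ih =>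
    rw [Function.iterate_succ_apply']
    exact ⟨(le_min ih.1 (min_le_right _ _)).trans (min_le_logitMap_fst ha (hp n)),
      (logitMap_snd_le_max ha (hp n)).trans (max_le ih.2 (le_max_right _ _))⟩

lemma exists_iterate_logitMap_fst_lt_lt_snd (ha : 0 < a) {p : ℝ × ℝ} (hp : p.1 < p.2) :
    ∃ n, ((logitMap a ℓ)^[n] p).1 < ℓ ∧ ℓ < ((logitMap a ℓ)^[n] p).2 := by
  by_contra! h
  set q := fun n => (logitMap a ℓ)^[n] p
  have hbounds := iterate_logitMap_bounds ha.le fun n => (le_or_gt ℓ (q n).1).imp_right (h n)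
  obtain ⟨ε, hε, hψ⟩ :=
    exists_pos_le_sigmoid_add_sub (sub_pos.2 hp) (min p.1 (ℓ - a)) (max p.2 (ℓ + a))
  have hgap := le_iterate_logitMap_snd_sub_fst (ℓ := ℓ) ha.le hp.le
  have step : ∀ n, (q n).2 - (q n).1 + a * ε ≤ (q (n + 1)).2 - (q (n + 1)).1 := by
    intro n
    have hmem : (q n).1 ∈ Icc (min p.1 (ℓ - a)) (max p.2 (ℓ + a)) :=
      ⟨(hbounds n).1, by linarith [hgap n, (hbounds n).2]⟩
    have : sigmoid ((q n).1 + (p.2 - p.1)) ≤ sigmoid (q n).2 := sigmoid_le (by linarith [hgap n])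
    simp only [q, Function.iterate_succ_apply', logitMap_snd_sub_fst]
    nlinarith [hψ _ hmem]
  have grow : ∀ n : ℕ, p.2 - p.1 + n * (a * ε) ≤ (q n).2 - (q n).1 := by
    intro n
    induction n with
    | zero => simp [q]
    | succ n ih => push_cast; linarith [step n]
  obtain ⟨n, hn⟩ := ((tendsto_atTop_of_add_mul_le (mul_pos ha hε) grow).eventually_gt_atTop
    (max p.2 (ℓ + a) - min p.1 (ℓ - a))).exists
  linarith [hbounds n]

theorem tendsto_iterate_chaosMap2_sigmoid (ha : 0 < a) {u v : ℝ} (huv : u < v) :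
    Tendsto (fun n => (chaosMap2 a (sigmoid ℓ))^[n] (sigmoid u, sigmoid v)) atTop (𝓝 (0, 1)) := by
  obtain ⟨m, hm₁, hm₂⟩ := exists_iterate_logitMap_fst_lt_lt_snd (ℓ := ℓ) (p := (u, v)) ha huv
  obtain ⟨hu, hv⟩ := tendsto_iterate_logitMap_of_fst_lt_lt_snd ha hm₁ hm₂
  rw [← tendsto_add_atTop_iff_nat m]
  refine ((tendsto_sigmoid_atBot.comp hu).prodMk_nhds (tendsto_sigmoid_atTop.comp hv)).congr
    fun n => ?_
  simp only [Function.comp_apply, ← Function.iterate_add_apply]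
  exact (semiconj_sigmoid_logitMap a ℓ).iterate_right (n + m) (u, v)

theorem tendsto_iterate_chaosMap2_zero_sigmoid (ha : 0 < a) (v : ℝ) :
    Tendsto (fun n => (chaosMap2 a (sigmoid ℓ))^[n] (0, sigmoid v)) atTop (𝓝 (0, 1)) := by
  have hsc : Function.Semiconj (fun v => ((0 : ℝ), sigmoid v)) (· + a * sigmoid ℓ)
      (chaosMap2 a (sigmoid ℓ)) := fun v => by
    simp [chaosMap2, sigmoid_div_sigmoid_add_mul_exp]
  have hv : Tendsto (fun n : ℕ => v + n * (a * sigmoid ℓ)) atTop atTop :=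
    tendsto_atTop_of_add_mul_le (mul_pos ha (sigmoid_pos ℓ)) fun _ => le_rfl
  refine (tendsto_const_nhds.prodMk_nhds (tendsto_sigmoid_atTop.comp hv)).congr fun n => ?_
  rw [← hsc.iterate_right n v, add_right_iterate_apply, nsmul_eq_mul]
  rfl

theorem tendsto_iterate_chaosMap2_sigmoid_one (ha : 0 < a) (u : ℝ) :
    Tendsto (fun n => (chaosMap2 a (sigmoid ℓ))^[n] (sigmoid u, 1)) atTop (𝓝 (0, 1)) := by
  have hsc : Function.Semiconj (fun u => (sigmoid u, (1 : ℝ))) (· + -(a * (1 - sigmoid ℓ)))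
      (chaosMap2 a (sigmoid ℓ)) := fun u => by
    simp only [← sub_eq_add_neg]
    simp [chaosMap2, sigmoid_div_sigmoid_add_mul_exp]
  have hu : Tendsto (fun n : ℕ => u - n * (a * (1 - sigmoid ℓ))) atTop atBot :=
    tendsto_atBot_of_le_sub_mul (mul_pos ha (sub_pos.2 (sigmoid_lt_one ℓ))) fun _ => le_rfl
  refine ((tendsto_sigmoid_atBot.comp hu).prodMk_nhds tendsto_const_nhds).congr fun n => ?_
  rw [← hsc.iterate_right n u, add_right_iterate_apply, nsmul_eq_mul, mul_neg, ← sub_eq_add_neg]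
  rfl

/-- For every `a > 0` and `b ∈ (0,1)`, the trajectory of every point
`(x,y) ∈ [0,1]²` with `x < y` (above the diagonal) converges to `(0,1)`. -/
theorem stmt_19 (a b : ℝ) (ha : 0 < a) (hb : b ∈ Set.Ioo (0 : ℝ) 1)
    (x y : ℝ) (hx0 : 0 ≤ x) (hxy : x < y) (hy1 : y ≤ 1) :
    Filter.Tendsto (fun n : ℕ => (chaosMap2 a b)^[n] (x, y))
      Filter.atTop (nhds ((0 : ℝ), (1 : ℝ))) := by
  obtain ⟨ℓ, rfl⟩ : b ∈ range sigmoid := range_sigmoid ▸ hb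
  rcases hx0.eq_or_lt with rfl | hx0 <;> rcases hy1.eq_or_lt with rfl | hy1
  · have hfix : chaosMap2 a (sigmoid ℓ) (0, 1) = (0, 1) := by simp [chaosMap2]
    simp only [Function.iterate_fixed hfix, tendsto_const_nhds]
  · obtain ⟨v, rfl⟩ : y ∈ range sigmoid := range_sigmoid ▸ ⟨hxy, hy1⟩
    exact tendsto_iterate_chaosMap2_zero_sigmoid ha v
  · obtain ⟨u, rfl⟩ : x ∈ range sigmoid := range_sigmoid ▸ ⟨hx0, hxy⟩
    exact tendsto_iterate_chaosMap2_sigmoid_one ha u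
  · obtain ⟨u, rfl⟩ : x ∈ range sigmoid := range_sigmoid ▸ ⟨hx0, hxy.trans hy1⟩
    obtain ⟨v, rfl⟩ : y ∈ range sigmoid := range_sigmoid ▸ ⟨hx0.trans hxy, hy1⟩
    exact tendsto_iterate_chaosMap2_sigmoid ha (sigmoid_lt_iff.1 hxy)
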